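/- arXiv:1903.10596 — 2 statements merged into one kernel-verified Lean document; each statement's English description precedes it below -/
import Mathlib

section
/- Let ‖·‖_D be a D-norm on ℝᵈ with partial derivatives up to order d on (−∞,0)ᵈ, and set φ(x) = −‖x‖_D, φ_n(x) = −n·log(1/(1 − ‖x‖_D/n)). Then for every nonempty block B ⊆ {1,…,d} and every x < 0, the mixed partial derivative ∂^{|B|}φ_n(x)/∂x_B converges to ∂^{|B|}φ(x)/∂x_B as n → ∞. Consequently, the density f⁽ⁿ⁾(x) = ∂ᵈ/∂x₁⋯∂x_d (1 − ‖x‖_D/n)^n converges pointwise to the density g(x) = ∂ᵈ/∂x₁⋯∂x_d exp(−‖x‖_D) for each x < 0. -/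
/-!
Put `t = 1/n`. With `L(u) = -log(1 - u)/u`, extended analytically by `L(0) = 1` on `u < 1`,
one has `φ_n(y) = F(1/n, y)` and `φ(y) = F(0, y)` for `F(t, y) = -N(y) L(t N(y))`, while
`(1 - N(y)/n)^n = exp F(1/n, y)` wherever `N(y) < n`. Since `F` is jointly `C^d` near
`{0} × (-∞,0)ᵈ`, its mixed partials in `y` of order at most `d` are jointly continuous in
`(t, y)`, so letting `t = 1/n → 0` gives both limits.
-/
open Filter

/-- Mixed partial derivative of `f : ℝᵈ → ℝ` along the list of coordinates `l`. -/
noncomputable def mixedPartial {d : ℕ} : List (Fin d) → ((Fin d → ℝ) → ℝ) → (Fin d → ℝ) → ℝ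
  | [], f => f
  | i :: t, f => fun x => fderiv ℝ (mixedPartial t f) x (Pi.single i 1)

open Topology

theorem mixedPartial_eventuallyEq {d : ℕ} {f g : (Fin d → ℝ) → ℝ} {x : Fin d → ℝ}
    (h : f =ᶠ[𝓝 x] g) : ∀ l : List (Fin d), mixedPartial l f =ᶠ[𝓝 x] mixedPartial l g
  | [] => h
  | i :: t => ((mixedPartial_eventuallyEq h t).fderiv (𝕜 := ℝ)).mono fun y hy => by
      simp only [mixedPartial, hy]

section Parametric

variable {d : ℕ} {P : Type*} [NormedAddCommGroup P] [NormedSpace ℝ P]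
  {V : Set (P × (Fin d → ℝ))} {G : P × (Fin d → ℝ) → ℝ} {n : WithTop ℕ∞}

theorem contDiffOn_mixedPartial_param (hV : IsOpen V) (hG : ContDiffOn ℝ n G V) :
    ∀ (l : List (Fin d)) {k : WithTop ℕ∞}, l.length + k ≤ n →
      ContDiffOn ℝ k (fun q => mixedPartial l (fun y => G (q.1, y)) q.2) V
  | [], k, hl => hG.of_le (by simpa using hl)
  | i :: t, k, hl => by
    have ih := contDiffOn_mixedPartial_param hV hG t (k := k + 1) (by
      simpa only [List.length_cons, Nat.cast_add, Nat.cast_one, add_assoc, add_comm 1 k] using hl)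
    intro p hp
    have hslice : ContDiffAt ℝ (k + 1)
        (fun r : (P × (Fin d → ℝ)) × (Fin d → ℝ) => mixedPartial t (fun y => G (r.1.1, y)) r.2)
        (p, p.2) :=
      (ih.contDiffAt (hV.mem_nhds hp)).comp (p, p.2)
        ((contDiff_fst.comp contDiff_fst).prodMk contDiff_snd).contDiffAt
    exact ((hslice.fderiv contDiffAt_snd le_rfl).clm_apply contDiffAt_const).contDiffWithinAt

theorem tendsto_mixedPartial_param (hV : IsOpen V) (hG : ContDiffOn ℝ n G V)
    {l : List (Fin d)} (hl : l.length ≤ n) {α : Type*} {F : Filter α} {t : α → P} {t₀ : P}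
    (ht : Tendsto t F (𝓝 t₀)) {x : Fin d → ℝ} (hx : (t₀, x) ∈ V) :
    Tendsto (fun a => mixedPartial l (fun y => G (t a, y)) x) F
      (𝓝 (mixedPartial l (fun y => G (t₀, y)) x)) :=
  ((contDiffOn_mixedPartial_param hV hG l (k := 0) (by simpa using hl)).continuousOn.continuousAt
    (hV.mem_nhds hx)).tendsto.comp (ht.prodMk_nhds tendsto_const_nhds)

end Parametric

noncomputable def logOneSubSlope : ℝ → ℝ := dslope (fun u => -Real.log (1 - u)) 0

theorem analyticAt_neg_log_one_sub {u : ℝ} (hu : u < 1) :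
    AnalyticAt ℝ (fun u => -Real.log (1 - u)) u :=
  ((analyticAt_const.sub analyticAt_id).log (by simpa using hu)).neg

theorem analyticAt_logOneSubSlope {u : ℝ} (hu : u < 1) : AnalyticAt ℝ logOneSubSlope u := by
  rcases eq_or_ne u 0 with rfl | hu0
  · obtain ⟨p, hp⟩ := analyticAt_neg_log_one_sub hu
    exact ⟨_, hp.has_fpower_series_dslope_fslope⟩
  · refine AnalyticAt.congr ?_ (dslope_eventuallyEq_slope_of_ne _ hu0).symm
    simp only [slope_fun_def_field]
    exact ((analyticAt_neg_log_one_sub hu).sub analyticAt_const).div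
      (analyticAt_id.sub analyticAt_const) (by simpa using hu0)

theorem logOneSubSlope_zero : logOneSubSlope 0 = 1 := by
  have h := (((hasDerivAt_id (0 : ℝ)).const_sub 1).log (by norm_num)).neg
  simpa [logOneSubSlope, dslope_same] using h.deriv

theorem logOneSubSlope_of_ne {u : ℝ} (hu : u ≠ 0) :
    logOneSubSlope u = -Real.log (1 - u) / u := by
  simp [logOneSubSlope, dslope_of_ne _ hu, slope_def_field]

section LogFamily

variable {d : ℕ} {N : (Fin d → ℝ) → ℝ}

noncomputable def logFamily (N : (Fin d → ℝ) → ℝ) (p : ℝ × (Fin d → ℝ)) : ℝ :=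
  -N p.2 * logOneSubSlope (p.1 * N p.2)

theorem logFamily_zero (y : Fin d → ℝ) : logFamily N (0, y) = -N y := by
  simp [logFamily, logOneSubSlope_zero]

theorem logFamily_inv_natCast {n : ℕ} (hn : n ≠ 0) (y : Fin d → ℝ) :
    logFamily N ((n : ℝ)⁻¹, y) = n * Real.log (1 - N y / n) := by
  rcases eq_or_ne (N y) 0 with hy | hy
  · simp [logFamily, hy]
  · rw [logFamily, logOneSubSlope_of_ne (by simp [hn, hy])]
    field_simp

theorem exists_isOpen_contDiffOn_logFamily {U : Set (Fin d → ℝ)} {k : WithTop ℕ∞}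
    (hU : IsOpen U) (hN : ContDiffOn ℝ k N U) :
    ∃ V, IsOpen V ∧ (∀ x ∈ U, ((0 : ℝ), x) ∈ V) ∧ ContDiffOn ℝ k (logFamily N) V := by
  have hL : ContDiffOn ℝ k logOneSubSlope (Set.Iio 1) := fun u hu =>
    (analyticAt_logOneSubSlope hu).contDiffAt.contDiffWithinAt
  have hNsnd : ContDiffOn ℝ k (fun p : ℝ × (Fin d → ℝ) => N p.2) (Set.univ ×ˢ U) :=
    hN.comp contDiff_snd.contDiffOn fun p hp => hp.2
  have harg := contDiff_fst.contDiffOn.mul hNsnd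
  refine ⟨(Set.univ ×ˢ U) ∩ (fun p => p.1 * N p.2) ⁻¹' Set.Iio 1,
    harg.continuousOn.isOpen_inter_preimage (isOpen_univ.prod hU) isOpen_Iio,
    fun x hx => ⟨⟨trivial, hx⟩, by simp⟩, ?_⟩
  exact (hNsnd.neg.mono Set.inter_subset_left).mul
    (hL.comp (harg.mono Set.inter_subset_left) fun p hp => hp.2)

variable {U : Set (Fin d → ℝ)} {k : WithTop ℕ∞} {l : List (Fin d)} {x : Fin d → ℝ}

theorem tendsto_mixedPartial_logFamily (hU : IsOpen U) (hN : ContDiffOn ℝ k N U)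
    (hl : l.length ≤ k) (hx : x ∈ U) {G : ℝ → ℝ} (hG : ContDiff ℝ k G) :
    Tendsto (fun n : ℕ => mixedPartial l (fun y => G (logFamily N ((n : ℝ)⁻¹, y))) x) atTop
      (𝓝 (mixedPartial l (fun y => G (-N y)) x)) := by
  obtain ⟨V, hV, hUV, hF⟩ := exists_isOpen_contDiffOn_logFamily hU hN
  simpa only [Function.comp_apply, logFamily_zero] using
    tendsto_mixedPartial_param hV (hG.comp_contDiffOn hF) hl tendsto_inv_atTop_nhds_zero_nat
      (hUV x hx)

theorem tendsto_mixedPartial_neg_mul_log (hU : IsOpen U) (hN : ContDiffOn ℝ k N U)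
    (hl : l.length ≤ k) (hx : x ∈ U) :
    Tendsto (fun n : ℕ => mixedPartial l (fun y => -(n : ℝ) * Real.log (1 / (1 - N y / n))) x)
      atTop (𝓝 (mixedPartial l (fun y => -N y) x)) := by
  refine (tendsto_mixedPartial_logFamily hU hN hl hx contDiff_id).congr' ?_
  filter_upwards [eventually_ne_atTop 0] with n hn
  congr 1
  funext y
  rw [id, logFamily_inv_natCast hn, one_div, Real.log_inv]
  ring

theorem tendsto_mixedPartial_one_sub_div_pow (hU : IsOpen U) (hN : ContDiffOn ℝ k N U)
    (hl : l.length ≤ k) (hx : x ∈ U) :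
    Tendsto (fun n : ℕ => mixedPartial l (fun y => (1 - N y / n) ^ n) x)
      atTop (𝓝 (mixedPartial l (fun y => Real.exp (-N y)) x)) := by
  refine (tendsto_mixedPartial_logFamily hU hN hl hx Real.contDiff_exp).congr' ?_
  have hNx : ContinuousAt N x := hN.continuousOn.continuousAt (hU.mem_nhds hx)
  filter_upwards [eventually_ne_atTop 0, tendsto_natCast_atTop_atTop.eventually_gt_atTop (N x)]
    with n hn hxn
  refine (mixedPartial_eventuallyEq ?_ l).eq_of_nhds
  filter_upwards [hNx.eventually_lt continuousAt_const hxn] with y hy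
  have hpos : 0 < 1 - N y / n := by
    rw [sub_pos, div_lt_one (by positivity)]
    exact hy
  rw [logFamily_inv_natCast hn, Real.exp_nat_mul, Real.exp_log hpos]

end LogFamily

theorem stmt_12_general {d : ℕ} (N : (Fin d → ℝ) → ℝ)
    (hNsmooth : ContDiffOn ℝ (d : ℕ∞) N {x : Fin d → ℝ | ∀ j, x j < 0}) :
    (∀ B : Finset (Fin d), B.Nonempty → ∀ x : Fin d → ℝ, (∀ j, x j < 0) →
      Tendsto
        (fun n : ℕ => mixedPartial (B.sort (· ≤ ·))
          (fun y => -(n : ℝ) * Real.log (1 / (1 - N y / n))) x)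
        atTop
        (nhds (mixedPartial (B.sort (· ≤ ·)) (fun y => -N y) x))) ∧
    (∀ x : Fin d → ℝ, (∀ j, x j < 0) →
      Tendsto
        (fun n : ℕ => mixedPartial (List.finRange d) (fun y => (1 - N y / n) ^ n) x)
        atTop
        (nhds (mixedPartial (List.finRange d) (fun y => Real.exp (-N y)) x))) := by
  have hΩ : IsOpen {x : Fin d → ℝ | ∀ j, x j < 0} := by
    simpa only [Set.ofPred_forall] using
      isOpen_iInter_of_finite fun j => isOpen_lt (continuous_apply j) continuous_const
  refine ⟨fun B _ x hx => tendsto_mixedPartial_neg_mul_log hΩ hNsmooth ?_ hx,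
    fun x hx => tendsto_mixedPartial_one_sub_div_pow hΩ hNsmooth ?_ hx⟩
  · simpa [Finset.length_sort] using B.card_le_univ
  · simp

/-- for a D-norm `‖·‖_D` with partial derivatives up to order `d` on the
negative orthant, with `φ = −‖·‖_D` and `φ_n = −n log(1/(1 − ‖·‖_D/n))`, every mixed
partial `∂^{|B|}φ_n/∂x_B` converges to `∂^{|B|}φ/∂x_B` at every `x < 0`; consequently
the densities `f⁽ⁿ⁾ = ∂ᵈ/∂x₁⋯∂x_d (1 − ‖x‖_D/n)^n` converge pointwise to
`g = ∂ᵈ/∂x₁⋯∂x_d exp(−‖x‖_D)` on `(-∞,0)ᵈ`. -/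
theorem stmt_12 {d : ℕ} (hd : d ≠ 0) (N : (Fin d → ℝ) → ℝ)
    (hN0 : ∀ x, 0 ≤ N x)
    (hNhom : ∀ (c : ℝ) (x : Fin d → ℝ), N (c • x) = |c| * N x)
    (hNtri : ∀ x y : Fin d → ℝ, N (x + y) ≤ N x + N y)
    (hNsmooth : ContDiffOn ℝ (d : ℕ∞) N {x : Fin d → ℝ | ∀ j, x j < 0}) :
    (∀ B : Finset (Fin d), B.Nonempty → ∀ x : Fin d → ℝ, (∀ j, x j < 0) →
      Tendsto
        (fun n : ℕ => mixedPartial (B.sort (· ≤ ·))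
          (fun y => -(n : ℝ) * Real.log (1 / (1 - N y / n))) x)
        atTop
        (nhds (mixedPartial (B.sort (· ≤ ·)) (fun y => -N y) x))) ∧
    (∀ x : Fin d → ℝ, (∀ j, x j < 0) →
      Tendsto
        (fun n : ℕ => mixedPartial (List.finRange d) (fun y => (1 - N y / n) ^ n) x)
        atTop
        (nhds (mixedPartial (List.finRange d) (fun y => Real.exp (-N y)) x))) :=
  stmt_12_general N hNsmooth
end

section
/- For the Gumbel–Hougaard copula C_p(u) = exp(−(Σ_{i=1}^d (−log uᵢ)^p)^{1/p}) with p ≥ 1, the expansion C_p(u) = 1 − ‖1 − u‖_p + o(‖1 − u‖) holds as u → 1 in [0,1]ᵈ, where ‖·‖_p is the logistic norm (Σ|xᵢ|^p)^{1/p}. -/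
/-!
Write `x = 1 - u` and `yᵢ = -log uᵢ`, and let `m = ‖x‖_∞`. Near `u = 1` one has
`xᵢ ≤ yᵢ ≤ (1 + 2m) xᵢ`, so by monotonicity and homogeneity of `N(x) = (∑ xᵢ^p)^(1/p)` the two
functionals `N(y)` and `N(x)` differ by at most `2m N(x) = O(m²)`. Since `N(y) = O(m)`, the
Taylor bound `|e^{-t} - 1 + t| ≤ t²` turns `C_p(u) = e^{-N(y)}` into `1 - N(x) + O(m²)`.
-/

open Filter Topology Finset

/-- The logistic norm `‖x‖_p` for `x ≥ 0`, written without absolute values so that it has the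
same shape as the exponent of `C_p`. -/
noncomputable def logisticNorm {ι : Type*} [Fintype ι] (p : ℝ) (x : ι → ℝ) : ℝ :=
  (∑ i, x i ^ p) ^ (1 / p)

section LogisticNorm

variable {ι : Type*} [Fintype ι] {p : ℝ} {x y : ι → ℝ}

lemma logisticNorm_nonneg (hx : 0 ≤ x) : 0 ≤ logisticNorm p x :=
  Real.rpow_nonneg (sum_nonneg fun i _ => Real.rpow_nonneg (hx i) p) _

lemma logisticNorm_mono (hp : 0 ≤ p) (hx : 0 ≤ x) (hxy : x ≤ y) :
    logisticNorm p x ≤ logisticNorm p y :=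
  Real.rpow_le_rpow (sum_nonneg fun i _ => Real.rpow_nonneg (hx i) p)
    (sum_le_sum fun i _ => Real.rpow_le_rpow (hx i) (hxy i) hp) (one_div_nonneg.2 hp)

lemma logisticNorm_smul (hp : p ≠ 0) {c : ℝ} (hc : 0 ≤ c) (hx : 0 ≤ x) :
    logisticNorm p (c • x) = c * logisticNorm p x := by
  simp only [logisticNorm, Pi.smul_apply, smul_eq_mul]
  rw [sum_congr rfl fun i _ => Real.mul_rpow hc (hx i), ← mul_sum,
    Real.mul_rpow (Real.rpow_nonneg hc p) (sum_nonneg fun i _ => Real.rpow_nonneg (hx i) p),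
    ← Real.rpow_mul hc, mul_one_div_cancel hp, Real.rpow_one]

lemma logisticNorm_le_mul_norm (hp : 0 < p) (hx : 0 ≤ x) :
    logisticNorm p x ≤ logisticNorm p (1 : ι → ℝ) * ‖x‖ :=
  calc logisticNorm p x ≤ logisticNorm p (‖x‖ • 1) :=
        logisticNorm_mono hp.le hx fun i => by
          simpa using (Real.le_norm_self _).trans (norm_le_pi_norm x i)
    _ = logisticNorm p (1 : ι → ℝ) * ‖x‖ := by
        rw [logisticNorm_smul hp.ne' (norm_nonneg x) zero_le_one, mul_comm]

end LogisticNorm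

lemma one_sub_le_neg_log {u : ℝ} (hu : 0 < u) : 1 - u ≤ -Real.log u := by
  linarith [Real.log_le_sub_one_of_pos hu]

lemma neg_log_le_mul_one_sub {u : ℝ} (hu : 1 / 2 ≤ u) (hu1 : u ≤ 1) :
    -Real.log u ≤ (1 + 2 * (1 - u)) * (1 - u) := by
  have hu0 : 0 < u := by linarith
  calc -Real.log u = Real.log u⁻¹ := (Real.log_inv u).symm
    _ ≤ u⁻¹ - 1 := Real.log_le_sub_one_of_pos (inv_pos.2 hu0)
    _ ≤ (1 + 2 * (1 - u)) * (1 - u) := by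
        rw [inv_eq_one_div, div_sub_one hu0.ne', div_le_iff₀ hu0]
        nlinarith [mul_nonneg (sub_nonneg.2 hu) (sub_nonneg.2 hu1)]

section GumbelHougaard

variable {ι : Type*} [Fintype ι] {p : ℝ} {u : ι → ℝ}

lemma one_sub_mem_Icc_of_norm_le (hu : u ≤ 1) (i : ι) : 1 - u i ∈ Set.Icc 0 ‖1 - u‖ :=
  ⟨sub_nonneg.2 (hu i), (Real.le_norm_self ((1 - u) i)).trans (norm_le_pi_norm (1 - u) i)⟩

lemma logisticNorm_one_sub_le_neg_log (hp : 0 ≤ p) (hu : u ≤ 1) (hm : ‖1 - u‖ ≤ 1 / 2) :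
    logisticNorm p (1 - u) ≤ logisticNorm p fun i => -Real.log (u i) :=
  logisticNorm_mono hp (fun i => (one_sub_mem_Icc_of_norm_le hu i).1) fun i => by
    have := (one_sub_mem_Icc_of_norm_le hu i).2
    exact one_sub_le_neg_log (by linarith)

lemma logisticNorm_neg_log_le (hp : 0 < p) (hu : u ≤ 1) (hm : ‖1 - u‖ ≤ 1 / 2) :
    (logisticNorm p fun i => -Real.log (u i)) ≤ (1 + 2 * ‖1 - u‖) * logisticNorm p (1 - u) := by
  have hx : 0 ≤ 1 - u := fun i => (one_sub_mem_Icc_of_norm_le hu i).1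
  rw [← logisticNorm_smul hp.ne' (by positivity) hx]
  refine logisticNorm_mono hp.le (fun i => ?_) fun i => ?_
  · have := (one_sub_mem_Icc_of_norm_le hu i).2
    exact (one_sub_le_neg_log (by linarith)).trans' (hx i)
  · obtain ⟨hx0, hxm⟩ := one_sub_mem_Icc_of_norm_le hu i
    calc -Real.log (u i) ≤ (1 + 2 * (1 - u i)) * (1 - u i) :=
          neg_log_le_mul_one_sub (by linarith) (hu i)
      _ ≤ (1 + 2 * ‖1 - u‖) * (1 - u i) := by gcongr

theorem abs_gumbel_remainder_le (hp : 0 < p) (hu : u ≤ 1) (hm : ‖1 - u‖ ≤ 1 / 2)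
    (hCm : 2 * logisticNorm p (1 : ι → ℝ) * ‖1 - u‖ ≤ 1) :
    |Real.exp (-logisticNorm p fun i => -Real.log (u i)) - 1 + logisticNorm p (1 - u)| ≤
      (4 * logisticNorm p (1 : ι → ℝ) ^ 2 + 2 * logisticNorm p (1 : ι → ℝ)) * ‖1 - u‖ ^ 2 := by
  set m := ‖1 - u‖
  set C := logisticNorm p (1 : ι → ℝ)
  set s := logisticNorm p (1 - u)
  set t := logisticNorm p fun i => -Real.log (u i)
  have hs0 : 0 ≤ s := logisticNorm_nonneg fun i => (one_sub_mem_Icc_of_norm_le hu i).1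
  have hsC : s ≤ C * m := logisticNorm_le_mul_norm hp fun i => (one_sub_mem_Icc_of_norm_le hu i).1
  have hst : s ≤ t := logisticNorm_one_sub_le_neg_log hp.le hu hm
  have hts : t ≤ (1 + 2 * m) * s := logisticNorm_neg_log_le hp hu hm
  have htC : t ≤ 2 * C * m := by nlinarith [norm_nonneg (1 - u)]
  have hexp : |Real.exp (-t) - 1 + t| ≤ (2 * C * m) ^ 2 :=
    calc |Real.exp (-t) - 1 + t| = |Real.exp (-t) - 1 - -t| := by rw [sub_neg_eq_add]
      _ ≤ (-t) ^ 2 := Real.abs_exp_sub_one_sub_id_le <| by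
          rw [abs_neg, abs_of_nonneg (by linarith)]; linarith
      _ ≤ (2 * C * m) ^ 2 := by rw [neg_sq]; gcongr; linarith
  calc |Real.exp (-t) - 1 + s| = |(Real.exp (-t) - 1 + t) - (t - s)| := by ring_nf
    _ ≤ |Real.exp (-t) - 1 + t| + |t - s| := abs_sub _ _
    _ ≤ (2 * C * m) ^ 2 + 2 * C * m ^ 2 := by
        rw [abs_of_nonneg (sub_nonneg.2 hst)]
        nlinarith [norm_nonneg (1 - u)]
    _ = (4 * C ^ 2 + 2 * C) * m ^ 2 := by ring

end GumbelHougaard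

theorem stmt_15_general {d : ℕ} (p : ℝ) (hp : 1 ≤ p) :
    Tendsto
      (fun u : Fin d → ℝ =>
        (Real.exp (-(∑ i, (-Real.log (u i)) ^ p) ^ (1 / p)) - 1 +
            (∑ i, (1 - u i) ^ p) ^ (1 / p)) / ‖(1 : Fin d → ℝ) - u‖)
      (nhdsWithin 1 (Set.Icc (0 : Fin d → ℝ) 1 \ {1}))
      (nhds 0) := by
  set C := logisticNorm p (1 : Fin d → ℝ)
  have hm : Tendsto (fun u : Fin d → ℝ => ‖1 - u‖)
      (𝓝[Set.Icc 0 1 \ {1}] 1) (𝓝 0) :=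
    (Continuous.tendsto' (f := fun u : Fin d → ℝ => ‖1 - u‖) (by fun_prop) 1 0
      (by simp)).mono_left nhdsWithin_le_nhds
  have hCm : Tendsto (fun u : Fin d → ℝ => 2 * C * ‖1 - u‖) (𝓝[Set.Icc 0 1 \ {1}] 1) (𝓝 0) := by
    simpa using hm.const_mul (2 * C)
  refine squeeze_zero_norm' ?_ (by simpa using hm.const_mul (4 * C ^ 2 + 2 * C))
  filter_upwards [self_mem_nhdsWithin, hm.eventually (ge_mem_nhds one_half_pos),
    hCm.eventually (ge_mem_nhds one_pos)] with u ⟨⟨_, hu⟩, hu1⟩ hm hCm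
  have hpos : 0 < ‖1 - u‖ := norm_pos_iff.2 (sub_ne_zero.2 (Ne.symm hu1))
  rw [norm_div, norm_norm, div_le_iff₀ hpos, mul_assoc, ← sq]
  exact abs_gumbel_remainder_le (by linarith) hu hm hCm

/-- for the Gumbel–Hougaard copula
`C_p(u) = exp(−(∑ (−log uᵢ)^p)^{1/p})`, `p ≥ 1`, one has
`C_p(u) = 1 − ‖1 − u‖_p + o(‖1 − u‖)` as `u → 1` in `[0,1]ᵈ`, i.e. the normalised
remainder tends to `0`. -/
theorem stmt_15 {d : ℕ} (hd : d ≠ 0) (p : ℝ) (hp : 1 ≤ p) :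
    Tendsto
      (fun u : Fin d → ℝ =>
        (Real.exp (-(∑ i, (-Real.log (u i)) ^ p) ^ (1 / p)) - 1 +
            (∑ i, (1 - u i) ^ p) ^ (1 / p)) / ‖(1 : Fin d → ℝ) - u‖)
      (nhdsWithin 1 (Set.Icc (0 : Fin d → ℝ) 1 \ {1}))
      (nhds 0) :=
  stmt_15_general p hp
end
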